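/- Let g : ℝ^D → ℝ^D be a C^∞ map such that sup_x ‖Dg(x)‖ ≤ σ with σ > 1 and the derivatives of g of all orders up to m ≥ 1 are uniformly bounded. Then there exists a constant C (depending on m and the bounds on the derivatives of g up to order m) such that for every n ∈ ℕ: (a) sup_x ‖D^m(g^n)(x)‖ ≤ Cσ^{mn}, where g^n is the n-fold composition; and (b) for every C^∞ function φ : ℝ^D → ℝ whose derivatives up to order m are uniformly bounded, sup_x ‖D^m(φ∘g^n)(x)‖ ≤ Cσ^{m²n} ‖φ‖_{C^m}. -/

import Mathlib

/-! The bound is proved order by order. If the derivatives of `g^[n]` of orders `1, …, k` grow at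
most like `σ^{jn}`, then, since `D(g^[n+1]) = (Dg ∘ g^[n]) · D(g^[n])`, Leibniz's rule and Faà di
Bruno's formula give `‖D^{k+1} g^[n+1] x‖ ≤ σ ‖D^{k+1} g^[n] x‖ + K σ^{(k+1)n}`: every term but one
involves only derivatives of order at most `k`. As `σ < σ^{k+1}` for `k ≥ 1` (and `K = 0` for
`k = 0`), this recurrence gives `‖D^{k+1} g^[n]‖ = O(σ^{(k+1)n})`. Part (b) is Faà di Bruno's
formula for `φ ∘ g^[n]` together with `σ^{mn} ≤ σ^{m²n}`. -/

noncomputable section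

/-- The `C^m` norm of `φ`: the supremum over `x` of the norms of the derivatives of `φ`
of orders `0` through `m`. -/
def CmNorm {E F : Type*} [NormedAddCommGroup E] [NormedSpace ℝ E]
    [NormedAddCommGroup F] [NormedSpace ℝ F] (m : ℕ) (φ : E → F) : ℝ :=
  ⨆ k : Fin (m + 1), ⨆ x, ‖iteratedFDeriv ℝ (k : ℕ) φ x‖

open scoped ContDiff
open Finset

theorem le_mul_pow_of_le_mul_add {a : ℕ → ℝ} {σ ρ K C : ℝ} (hσ : 0 ≤ σ) (hρ : 0 ≤ ρ)
    (h0 : a 0 ≤ C) (hC : σ * C + K ≤ C * ρ) (ha : ∀ n, a (n + 1) ≤ σ * a n + K * ρ ^ n) :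
    ∀ n, a n ≤ C * ρ ^ n
  | 0 => by simpa using h0
  | n + 1 => calc
      a (n + 1) ≤ σ * (C * ρ ^ n) + K * ρ ^ n :=
        (ha n).trans (by gcongr; exact le_mul_pow_of_le_mul_add hσ hρ h0 hC ha n)
      _ = (σ * C + K) * ρ ^ n := by ring
      _ ≤ C * ρ ^ (n + 1) := by rw [pow_succ, ← mul_assoc, mul_right_comm]; gcongr

theorem exists_le_and_mul_add_le_mul {σ ρ : ℝ} (h : σ < ρ) (c K : ℝ) :
    ∃ C, c ≤ C ∧ σ * C + K ≤ C * ρ := by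
  refine ⟨max c (K / (ρ - σ)), le_max_left _ _, ?_⟩
  have hK : K ≤ max c (K / (ρ - σ)) * (ρ - σ) :=
    (div_le_iff₀ (sub_pos.mpr h)).mp (le_max_right _ _)
  linarith

theorem mul_pow_mul_le_mul_pow_pow {C σ : ℝ} (hC : 1 ≤ C) (hσ : 0 ≤ σ) {j : ℕ} (hj : j ≠ 0)
    (n : ℕ) : C * σ ^ (j * n) ≤ (C * σ ^ n) ^ j := by
  rw [mul_pow, ← pow_mul, mul_comm n j]
  gcongr
  exact le_self_pow₀ hC hj

section

variable {E : Type*} [NormedAddCommGroup E] [NormedSpace ℝ E]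

theorem ContDiff.iterate {N : WithTop ℕ∞} {g : E → E} (hg : ContDiff ℝ N g) :
    ∀ n, ContDiff ℝ N g^[n]
  | 0 => contDiff_id
  | n + 1 => by rw [Function.iterate_succ']; exact hg.comp (hg.iterate n)

theorem fderiv_iterate_succ {g : E → E} (hg : Differentiable ℝ g) (n : ℕ) :
    fderiv ℝ g^[n + 1] = fun x ↦ (fderiv ℝ g (g^[n] x)).comp (fderiv ℝ g^[n] x) := by
  funext x
  rw [Function.iterate_succ']
  exact fderiv_comp x (hg _) ((hg.iterate n) x)

theorem norm_iteratedFDeriv_succ_id_le (k : ℕ) (x : E) :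
    ‖iteratedFDeriv ℝ (k + 1) (id : E → E) x‖ ≤ 1 := by
  rw [← norm_iteratedFDeriv_fderiv, show fderiv ℝ (id : E → E) = fun _ ↦ .id ℝ E from
    funext fun _ ↦ fderiv_id]
  cases k with
  | zero => simpa using ContinuousLinearMap.norm_id_le
  | succ k => simp [iteratedFDeriv_const_of_ne (Nat.succ_ne_zero k)]

theorem norm_iteratedFDeriv_le_CmNorm {F : Type*} [NormedAddCommGroup F] [NormedSpace ℝ F]
    {m : ℕ} {φ : E → F} (hφ : ∀ k ≤ m, ∃ B, ∀ x, ‖iteratedFDeriv ℝ k φ x‖ ≤ B)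
    {k : ℕ} (hk : k ≤ m) (x : E) : ‖iteratedFDeriv ℝ k φ x‖ ≤ CmNorm m φ := by
  obtain ⟨B, hB⟩ := hφ k hk
  calc ‖iteratedFDeriv ℝ k φ x‖ ≤ ⨆ y, ‖iteratedFDeriv ℝ k φ y‖ :=
        le_ciSup ⟨B, Set.forall_mem_range.mpr hB⟩ x
    _ ≤ CmNorm m φ :=
        le_ciSup (f := fun i : Fin (m + 1) ↦ ⨆ y, ‖iteratedFDeriv ℝ i φ y‖)
          (Set.finite_range _).bddAbove ⟨k, Nat.lt_succ_of_le hk⟩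

variable {g : E → E} {σ A C : ℝ} {k : ℕ}

theorem norm_iteratedFDeriv_fderiv_comp_iterate_le (hg : ContDiff ℝ ∞ g) (hσ : 0 ≤ σ)
    (hA : ∀ i ≤ k, ∀ y, ‖iteratedFDeriv ℝ i (fderiv ℝ g) y‖ ≤ A) (hC : 1 ≤ C)
    (hgC : ∀ j, 1 ≤ j → j ≤ k → ∀ n x, ‖iteratedFDeriv ℝ j g^[n] x‖ ≤ C * σ ^ (j * n))
    (n : ℕ) (x : E) :
    ‖iteratedFDeriv ℝ k (fderiv ℝ g ∘ g^[n]) x‖ ≤ k.factorial * A * (C * σ ^ n) ^ k :=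
  norm_iteratedFDeriv_comp_le (hg.fderiv_right le_rfl) (hg.iterate n) ENat.LEInfty.out x
    (fun i hi ↦ hA i hi _)
    (fun j hj hjk ↦ (hgC j hj hjk n x).trans (mul_pow_mul_le_mul_pow_pow hC hσ (by omega) n))

/-- The `i`-th summand bounds the `(i + 1)`-st Leibniz term of `D^k ((Dg ∘ g^[n]) · D(g^[n]))`,
divided by `σ^{(k+1)n}`. -/
def iterateDerivConst (k : ℕ) (A C : ℝ) : ℝ :=
  ∑ i ∈ range k, (k.choose (i + 1) * (i + 1).factorial * A * C ^ (i + 2) : ℝ)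

theorem norm_iteratedFDeriv_iterate_succ_le (hg : ContDiff ℝ ∞ g) (hσ : 0 ≤ σ)
    (hDg : ∀ x, ‖fderiv ℝ g x‖ ≤ σ)
    (hA : ∀ i ≤ k, ∀ y, ‖iteratedFDeriv ℝ i (fderiv ℝ g) y‖ ≤ A) (hC : 1 ≤ C)
    (hgC : ∀ j, 1 ≤ j → j ≤ k → ∀ n x, ‖iteratedFDeriv ℝ j g^[n] x‖ ≤ C * σ ^ (j * n))
    (n : ℕ) (x : E) :
    ‖iteratedFDeriv ℝ (k + 1) g^[n + 1] x‖ ≤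
      σ * ‖iteratedFDeriv ℝ (k + 1) g^[n] x‖ + iterateDerivConst k A C * σ ^ ((k + 1) * n) := by
  have hleibniz := (ContinuousLinearMap.compL ℝ E E E).norm_iteratedFDeriv_le_of_bilinear_of_le_one
    ((hg.fderiv_right le_rfl).comp (hg.iterate n)) ((hg.iterate n).fderiv_right le_rfl) x
    ENat.LEInfty.out (ContinuousLinearMap.norm_compL_le ℝ E E E) (n := k)
  rw [← norm_iteratedFDeriv_fderiv, fderiv_iterate_succ (hg.differentiable (by simp))]
  refine hleibniz.trans ?_
  rw [sum_range_succ', iterateDerivConst, sum_mul]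
  refine (add_comm _ _).trans_le (add_le_add ?_ (sum_le_sum fun i hi ↦ ?_))
  · simpa [norm_iteratedFDeriv_fderiv] using
      mul_le_mul_of_nonneg_right (hDg (g^[n] x)) (norm_nonneg _)
  · have hik : i < k := mem_range.mp hi
    have hlow : ‖iteratedFDeriv ℝ (k - (i + 1)) (fderiv ℝ g^[n]) x‖ ≤ C * σ ^ ((k - i) * n) := by
      rw [norm_iteratedFDeriv_fderiv, show k - (i + 1) + 1 = k - i by omega]
      exact hgC (k - i) (by omega) (by omega) n x
    have hcomp := norm_iteratedFDeriv_fderiv_comp_iterate_le (k := i + 1) hg hσ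
      (fun l hl y ↦ hA l (by omega) y) hC (fun j hj hji ↦ hgC j hj (by omega)) n x
    calc (k.choose (i + 1) : ℝ) * ‖iteratedFDeriv ℝ (i + 1) (fderiv ℝ g ∘ g^[n]) x‖ *
          ‖iteratedFDeriv ℝ (k - (i + 1)) (fderiv ℝ g^[n]) x‖
        ≤ k.choose (i + 1) * ((i + 1).factorial * A * (C * σ ^ n) ^ (i + 1)) *
          (C * σ ^ ((k - i) * n)) :=
          mul_le_mul (mul_le_mul_of_nonneg_left hcomp (Nat.cast_nonneg _)) hlow
            (norm_nonneg _) (mul_nonneg (Nat.cast_nonneg _) ((norm_nonneg _).trans hcomp))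
      _ = k.choose (i + 1) * (i + 1).factorial * A * C ^ (i + 2) * σ ^ ((k + 1) * n) := by
          rw [show (k + 1) * n = n * (i + 1) + (k - i) * n by
            rw [Nat.mul_comm n, ← Nat.add_mul]; congr 1; omega]
          ring

theorem exists_norm_iteratedFDeriv_iterate_le (hg : ContDiff ℝ ∞ g) (hσ : 1 < σ)
    (hDg : ∀ x, ‖fderiv ℝ g x‖ ≤ σ) :
    ∀ k, (∀ i < k, ∀ y, ‖iteratedFDeriv ℝ i (fderiv ℝ g) y‖ ≤ A) → ∃ C, 1 ≤ C ∧
      ∀ j, 1 ≤ j → j ≤ k → ∀ n x, ‖iteratedFDeriv ℝ j g^[n] x‖ ≤ C * σ ^ (j * n)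
  | 0, _ => ⟨1, le_rfl, fun j hj hj0 ↦ absurd hj (by omega)⟩
  | k + 1, hA => by
    obtain ⟨C, hC, hgC⟩ :=
      exists_norm_iteratedFDeriv_iterate_le hg hσ hDg k fun i hi ↦ hA i (by omega)
    obtain ⟨C', hCC', hC'⟩ :
        ∃ C', C ≤ C' ∧ σ * C' + iterateDerivConst k A C ≤ C' * σ ^ (k + 1) := by
      rcases k with _ | k
      · exact ⟨C, le_rfl, by simp [iterateDerivConst, mul_comm]⟩
      · exact exists_le_and_mul_add_le_mul (lt_self_pow₀ hσ (by omega)) _ _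
    refine ⟨C', hC.trans hCC', fun j hj hjk n x ↦ ?_⟩
    rcases (show j ≤ k ∨ j = k + 1 by omega) with hjk | rfl
    · exact (hgC j hj hjk n x).trans (by gcongr)
    · have hrec (n : ℕ) := norm_iteratedFDeriv_iterate_succ_le hg (by linarith) hDg
        (fun i hi ↦ hA i (by omega)) hC hgC n x
      simp only [pow_mul] at hrec ⊢
      exact le_mul_pow_of_le_mul_add (a := fun n ↦ ‖iteratedFDeriv ℝ (k + 1) g^[n] x‖)
        (by linarith) (by positivity)
        ((norm_iteratedFDeriv_succ_id_le k x).trans (hC.trans hCC')) hC' hrec n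

end

/-- Let `g : ℝ^D → ℝ^D` be a `C^∞` map with `sup ‖Dg‖ ≤ σ`, `σ > 1`, and
with uniformly bounded derivatives of all orders up to `m ≥ 1`. Then there is a constant `C`
such that for every `n ∈ ℕ`: (a) `sup_x ‖D^m(g^n)(x)‖ ≤ C σ^{mn}`; and (b) for every `C^∞`
function `φ : ℝ^D → ℝ` with uniformly bounded derivatives up to order `m`,
`sup_x ‖D^m(φ ∘ g^n)(x)‖ ≤ C σ^{m²n} ‖φ‖_{C^m}`. -/
theorem statement_16 {D : ℕ} (g : (Fin D → ℝ) → (Fin D → ℝ))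
    (hg : ContDiff ℝ (⊤ : ℕ∞) g)
    (σ : ℝ) (hσ : 1 < σ) (hDg : ∀ x, ‖fderiv ℝ g x‖ ≤ σ)
    (m : ℕ) (hm : 1 ≤ m)
    (hbd : ∀ k : ℕ, 1 ≤ k → k ≤ m → ∃ B : ℝ, ∀ x, ‖iteratedFDeriv ℝ k g x‖ ≤ B) :
    ∃ C : ℝ,
      (∀ (n : ℕ) (x : Fin D → ℝ), ‖iteratedFDeriv ℝ m (g^[n]) x‖ ≤ C * σ ^ (m * n)) ∧
      (∀ φ : (Fin D → ℝ) → ℝ, ContDiff ℝ (⊤ : ℕ∞) φ →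
        (∀ k : ℕ, k ≤ m → ∃ B : ℝ, ∀ x, ‖iteratedFDeriv ℝ k φ x‖ ≤ B) →
        ∀ (n : ℕ) (x : Fin D → ℝ),
          ‖iteratedFDeriv ℝ m (φ ∘ g^[n]) x‖ ≤ C * σ ^ (m ^ 2 * n) * CmNorm m φ) := by
  obtain ⟨A, hA⟩ : ∃ A, ∀ i < m, ∀ y, ‖iteratedFDeriv ℝ i (fderiv ℝ g) y‖ ≤ A := by
    choose! B hB using hbd
    refine ⟨∑ i ∈ range m, |B (i + 1)|, fun i hi y ↦ ?_⟩
    rw [norm_iteratedFDeriv_fderiv]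
    exact (hB (i + 1) (by omega) hi y).trans <| (le_abs_self _).trans <|
      single_le_sum (fun j _ ↦ abs_nonneg (B (j + 1))) (mem_range.mpr hi)
  obtain ⟨C, hC, hgC⟩ := exists_norm_iteratedFDeriv_iterate_le hg hσ hDg m hA
  refine ⟨max C (m.factorial * C ^ m),
    fun n x ↦ (hgC m hm le_rfl n x).trans (by gcongr; exact le_max_left _ _),
    fun φ hφ hφbd n x ↦ ?_⟩
  have hφN : ∀ k ≤ m, ∀ y, ‖iteratedFDeriv ℝ k φ y‖ ≤ CmNorm m φ :=
    fun k hk ↦ norm_iteratedFDeriv_le_CmNorm hφbd hk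
  calc ‖iteratedFDeriv ℝ m (φ ∘ g^[n]) x‖ ≤ m.factorial * CmNorm m φ * (C * σ ^ n) ^ m :=
        norm_iteratedFDeriv_comp_le hφ (hg.iterate n) ENat.LEInfty.out x (fun i hi ↦ hφN i hi _)
          fun j hj hjm ↦ (hgC j hj hjm n x).trans
            (mul_pow_mul_le_mul_pow_pow hC (by linarith) (by omega) n)
    _ = m.factorial * C ^ m * σ ^ (m * n) * CmNorm m φ := by rw [mul_pow, ← pow_mul]; ring
    _ ≤ max C (m.factorial * C ^ m) * σ ^ (m ^ 2 * n) * CmNorm m φ := by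
        have := (norm_nonneg _).trans (hφN 0 (Nat.zero_le m) x)
        gcongr
        · exact le_max_right _ _
        · exact hσ.le
        · exact Nat.le_self_pow two_ne_zero m

end
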